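/- arXiv:2403.04917 — 4 statements merged into one kernel-verified Lean document; each statement's English description precedes it below -/
import Mathlib

section
/- Let V_tar be a finite nonempty set of targets, and consider the directed graph with node set V = {s, s'} ∪ V_tar and edge set E consisting of all edges from s to each target, all edges between every ordered pair of distinct targets, and all edges from each target to s'. Suppose y : E → {0, 1} satisfies the flow constraints (Σ_{e ∈ E_out(s)} y_e = 1, Σ_{e ∈ E_in(s')} y_e = 1, Σ_{e ∈ E_in(i)} y_e = 1 and Σ_{e ∈ E_in(i)} y_e = Σ_{e ∈ E_out(i)} y_e for every target i), and suppose there exists a function t : V → ℝ such that t_i < t_j for every edge e = (i, j) with y_e = 1. Then the support {e ∈ E : y_e = 1} is exactly the edge set of a directed Hamiltonian path from s to s' that visits every target in V_tar exactly once. -/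
/-- Nodes of the MT-TSP graph: the depot `s`, its copy `s'`, and the targets. -/
inductive Node (α : Type) where
  | s : Node α
  | s' : Node α
  | tar : α → Node α
  deriving DecidableEq, Fintype

/-- The edge set `E` of the MT-TSP graph: all edges from `s` to each target, between
every ordered pair of distinct targets, and from each target to `s'`. -/
def isEdge {α : Type} [DecidableEq α] : Node α × Node α → Bool
  | (Node.s, Node.tar _) => true
  | (Node.tar a, Node.tar b) => a != b
  | (Node.tar _, Node.s') => true
  | _ => false

/-- The edge set as a finset. -/
def Efin (α : Type) [Fintype α] [DecidableEq α] : Finset (Node α × Node α) :=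
  Finset.univ.filter (fun e => isEdge e = true)

/-- Edges of `E` entering node `i`. -/
def Ein {α : Type} [Fintype α] [DecidableEq α] (i : Node α) : Finset (Node α × Node α) :=
  (Efin α).filter (fun e => e.2 = i)

/-- Edges of `E` leaving node `i`. -/
def Eout {α : Type} [Fintype α] [DecidableEq α] (i : Node α) : Finset (Node α × Node α) :=
  (Efin α).filter (fun e => e.1 = i)

/-- The edge set of a directed path visiting the entries of `L` in order. -/
def listEdges {β : Type} (L : List β) : Set (β × β) := {p | p ∈ L.zip L.tail}

/-!
Every node other than `s'` has exactly one chosen out-edge (flow out of `s`; in-flow `1` plus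
conservation at a target), `s'` has none, and every target has a chosen in-edge. Since `t`
strictly increases along chosen edges, following successors from `s` never revisits a node, so
in the finite graph it must stop, and it can only stop at `s'`. Every target lies on this walk:
a target off the walk with minimal `t` would have a predecessor on the walk, whose unique
successor is then on the walk as well.
-/

namespace List

variable {β : Type*}

theorem rel_of_mem_zip_tail {R : β → β → Prop} {L : List β} (hL : L.IsChain R) {i j : β}
    (h : (i, j) ∈ L.zip L.tail) : R i j := by
  induction L using twoStepInduction with
  | nil | singleton => simp at h
  | cons_cons a b M _ ih =>
    rw [isChain_cons_cons] at hL
    rcases mem_cons.mp h with h | h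
    · obtain ⟨rfl, rfl⟩ := Prod.mk.inj h
      exact hL.1
    · exact ih b hL.2 h

theorem exists_mem_zip_tail_of_getLast?_ne {L : List β} {i : β} (hi : i ∈ L)
    (hlast : L.getLast? ≠ some i) : ∃ j, (i, j) ∈ L.zip L.tail := by
  induction L using twoStepInduction with
  | nil => simp at hi
  | singleton a => simp_all
  | cons_cons a b M _ ih =>
    rcases mem_cons.mp hi with rfl | hi
    · exact ⟨b, by simp⟩
    · obtain ⟨j, hj⟩ := ih b hi (by simpa [getLast?_cons_cons] using hlast)
      exact ⟨j, mem_cons_of_mem _ hj⟩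

end List

theorem Finite.wellFounded_lt_comp {β γ : Type*} [Finite β] [Preorder γ] (t : β → γ) :
    WellFounded (fun a b => t a < t b) :=
  letI : Preorder β := Preorder.lift t
  wellFounded_lt

section HamiltonianPath

variable {β : Type} {γ : Type*} [Preorder γ] {R : β → β → Prop} {t : β → γ} {src snk : β}

theorem List.IsChain.nodup_of_rel_imp_lt (hlt : ∀ i j, R i j → t i < t j) {L : List β}
    (hL : L.IsChain R) : L.Nodup := by
  have hsorted : (L.map t).IsChain (· < ·) := (List.isChain_map t).2 (hL.imp fun i j => hlt i j)
  exact (List.pairwise_map.1 (List.isChain_iff_pairwise.1 hsorted)).imp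
    fun h => ne_of_apply_ne t h.ne

theorem exists_isChain_getLast?_eq [Finite β] (hlt : ∀ i j, R i j → t i < t j)
    (hsucc : ∀ i, i ≠ snk → ∃ j, R i j) (x : β) :
    ∃ L : List β, (x :: L).IsChain R ∧ (x :: L).getLast? = some snk := by
  induction x using (Finite.wellFounded_lt_comp (OrderDual.toDual ∘ t)).induction with
  | _ x ih =>
  by_cases hx : x = snk
  · exact ⟨[], by simp, by simp [hx]⟩
  obtain ⟨y, hxy⟩ := hsucc x hx
  obtain ⟨L, hL, hlast⟩ := ih y (hlt x y hxy)
  refine ⟨y :: L, List.isChain_cons_cons.2 ⟨hxy, hL⟩, ?_⟩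
  simpa [List.getLast?_cons_cons] using hlast

theorem mem_zip_tail_of_rel (hfunc : ∀ i j k, R i j → R i k → j = k) (hsnk : ∀ j, ¬R snk j)
    {L : List β} (hL : L.IsChain R) (hlast : L.getLast? = some snk) {i j : β} (hi : i ∈ L)
    (hij : R i j) : (i, j) ∈ L.zip L.tail := by
  have hi_last : L.getLast? ≠ some i := by
    rintro h
    obtain rfl : snk = i := Option.some_injective _ (hlast.symm.trans h)
    exact hsnk j hij
  obtain ⟨k, hk⟩ := List.exists_mem_zip_tail_of_getLast?_ne hi hi_last
  rwa [hfunc i j k hij (List.rel_of_mem_zip_tail hL hk)]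

theorem mem_of_isChain_of_exists_pred [Finite β] (hlt : ∀ i j, R i j → t i < t j)
    (hfunc : ∀ i j k, R i j → R i k → j = k) (hsnk : ∀ j, ¬R snk j)
    (hpred : ∀ j, j ≠ src → j ≠ snk → ∃ i, R i j) {L : List β} (hL : L.IsChain R)
    (hsrc : src ∈ L) (hlast : L.getLast? = some snk) (x : β) : x ∈ L := by
  induction x using (Finite.wellFounded_lt_comp t).induction with
  | _ x ih =>
  by_cases hx_src : x = src
  · exact hx_src ▸ hsrc
  by_cases hx_snk : x = snk
  · exact hx_snk ▸ List.mem_of_getLast? hlast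
  obtain ⟨p, hpx⟩ := hpred x hx_src hx_snk
  have hpL : p ∈ L := ih p (hlt p x hpx)
  exact List.mem_of_mem_tail (List.of_mem_zip (mem_zip_tail_of_rel hfunc hsnk hL hlast hpL hpx)).2

theorem exists_hamiltonian_path_of_rel [Finite β] (hlt : ∀ i j, R i j → t i < t j)
    (hfunc : ∀ i j k, R i j → R i k → j = k) (hsucc : ∀ i, i ≠ snk → ∃ j, R i j)
    (hsnk : ∀ j, ¬R snk j) (hpred : ∀ j, j ≠ src → j ≠ snk → ∃ i, R i j) :
    ∃ M : List β, (src :: M).Nodup ∧ (∀ x, x ∈ src :: M) ∧ (src :: M).getLast? = some snk ∧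
      {e | R e.1 e.2} = listEdges (src :: M) := by
  obtain ⟨M, hM, hlast⟩ := exists_isChain_getLast?_eq hlt hsucc src
  have hall := mem_of_isChain_of_exists_pred hlt hfunc hsnk hpred hM List.mem_cons_self hlast
  refine ⟨M, hM.nodup_of_rel_imp_lt hlt, hall, hlast, Set.ext fun ⟨i, j⟩ => ⟨fun hij => ?_, ?_⟩⟩
  · exact mem_zip_tail_of_rel hfunc hsnk hM hlast (hall i) hij
  · exact List.rel_of_mem_zip_tail hM

end HamiltonianPath

theorem Finset.existsUnique_eq_one_of_sum_eq_one {ι : Type*} {S : Finset ι} {y : ι → ℝ}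
    (hbin : ∀ e ∈ S, y e = 0 ∨ y e = 1) (hs : ∑ e ∈ S, y e = 1) : ∃! e, e ∈ S ∧ y e = 1 := by
  classical
  obtain ⟨e, heS, he⟩ := Finset.exists_ne_zero_of_sum_ne_zero (hs.symm ▸ one_ne_zero)
  have he : y e = 1 := (hbin e heS).resolve_left he
  refine ⟨e, ⟨heS, he⟩, fun e' ⟨he'S, he'⟩ => ?_⟩
  by_contra hne
  have hle : y e' + y e ≤ ∑ x ∈ S, y x := by
    rw [← Finset.sum_pair hne]
    refine Finset.sum_le_sum_of_subset_of_nonneg (by simp [Finset.insert_subset_iff, *]) ?_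
    intro x hx _
    rcases hbin x hx with h | h <;> simp [h]
  linarith

namespace Node

theorem exists_eq_map_tar_append {α : Type} {M : List (Node α)} (hnd : (s :: M).Nodup)
    (hlast : (s :: M).getLast? = some s') : ∃ P : List α, M = P.map tar ++ [s'] := by
  rcases M.eq_nil_or_concat' with rfl | ⟨D, b, rfl⟩
  · simp at hlast
  rw [← List.cons_append, List.getLast?_concat] at hlast
  obtain rfl := Option.some_injective _ hlast
  obtain ⟨hs, hnd⟩ := List.nodup_cons.1 hnd
  have hD : D ∈ Set.range (List.map tar) := by
    rw [Set.range_list_map]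
    intro x hx
    cases x with
    | s => exact (hs (List.mem_append_left _ hx)).elim
    | s' => exact (List.disjoint_of_nodup_append hnd hx (List.mem_singleton_self _)).elim
    | tar a => exact ⟨a, rfl⟩
  obtain ⟨P, rfl⟩ := hD
  exact ⟨P, rfl⟩

section Flow

variable {α : Type} [Fintype α] [DecidableEq α] {y : Node α × Node α → ℝ}

theorem existsUnique_succ (hbin : ∀ e, y e = 0 ∨ y e = 1) (hsupp : ∀ e, e ∉ Efin α → y e = 0)
    {i : Node α} (h : ∑ e ∈ Eout i, y e = 1) : ∃! j, y (i, j) = 1 := by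
  obtain ⟨e, ⟨he_out, he⟩, huniq⟩ :=
    Finset.existsUnique_eq_one_of_sum_eq_one (fun e _ => hbin e) h
  obtain ⟨-, rfl⟩ := Finset.mem_filter.mp he_out
  refine ⟨e.2, he, fun j hj => ?_⟩
  have hj_out : (e.1, j) ∈ Eout e.1 := by
    refine Finset.mem_filter.mpr ⟨?_, rfl⟩
    by_contra hE
    simp [hsupp _ hE] at hj
  exact congrArg Prod.snd (huniq _ ⟨hj_out, hj⟩)

theorem s'_mk_notMem_Efin (j : Node α) : (s', j) ∉ Efin α := by
  simp only [Efin, Finset.mem_filter, Finset.mem_univ, true_and]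
  cases j <;> simp [isEdge]

theorem exists_pred (hbin : ∀ e, y e = 0 ∨ y e = 1) {j : Node α}
    (h : ∑ e ∈ Ein j, y e = 1) : ∃ i, y (i, j) = 1 := by
  obtain ⟨e, ⟨he_in, he⟩, -⟩ := Finset.existsUnique_eq_one_of_sum_eq_one (fun e _ => hbin e) h
  obtain ⟨-, rfl⟩ := Finset.mem_filter.mp he_in
  exact ⟨e.1, he⟩

end Flow

end Node

theorem stmt_9_general {α : Type} [Fintype α] [DecidableEq α]
    (y : Node α × Node α → ℝ)
    (hbin : ∀ e, y e = 0 ∨ y e = 1)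
    (hsupp : ∀ e, e ∉ Efin α → y e = 0)
    (hflow_s : ∑ e ∈ Eout (Node.s : Node α), y e = 1)
    (hflow_in : ∀ a : α, ∑ e ∈ Ein (Node.tar a), y e = 1)
    (hflow_cons : ∀ a : α, ∑ e ∈ Ein (Node.tar a), y e = ∑ e ∈ Eout (Node.tar a), y e)
    (t : Node α → ℝ)
    (ht : ∀ e : Node α × Node α, y e = 1 → t e.1 < t e.2) :
    ∃ P : List α, P.Nodup ∧ (∀ a : α, a ∈ P) ∧
      {e : Node α × Node α | y e = 1} =
        listEdges (Node.s :: (P.map Node.tar ++ [Node.s'])) := by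
  have hsnk : ∀ j, ¬y (.s', j) = 1 := fun j h => by
    simp [hsupp _ (Node.s'_mk_notMem_Efin j)] at h
  have hsucc : ∀ i : Node α, i ≠ .s' → ∃! j, y (i, j) = 1
    | .s, _ => Node.existsUnique_succ hbin hsupp hflow_s
    | .s', h => (h rfl).elim
    | .tar a, _ => Node.existsUnique_succ hbin hsupp (hflow_cons a ▸ hflow_in a)
  have hpred : ∀ j : Node α, j ≠ .s → j ≠ .s' → ∃ i, y (i, j) = 1
    | .s, h, _ => (h rfl).elim
    | .s', _, h => (h rfl).elim
    | .tar a, _, _ => Node.exists_pred hbin (hflow_in a)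
  have hfunc : ∀ i j k, y (i, j) = 1 → y (i, k) = 1 → j = k := fun i j k hij hik =>
    (hsucc i fun h => hsnk j (h ▸ hij)).unique hij hik
  obtain ⟨M, hnd, hall, hlast, hedges⟩ :=
    exists_hamiltonian_path_of_rel (R := fun i j => y (i, j) = 1) (fun i j => ht (i, j)) hfunc
      (fun i hi => (hsucc i hi).exists) hsnk hpred
  obtain ⟨P, rfl⟩ := Node.exists_eq_map_tar_append hnd hlast
  refine ⟨P, ?_, fun a => by simpa using hall (.tar a), hedges⟩
  exact ((List.nodup_cons.1 hnd).2.sublist (List.sublist_append_left _ _)).of_map _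

/-- If `y : E → {0, 1}` satisfies the MT-TSP flow constraints and there is
a function `t : V → ℝ` with `t i < t j` for every edge `(i, j)` with `y = 1`, then the
support `{e : y e = 1}` is exactly the edge set of a directed Hamiltonian path from `s`
to `s'` visiting every target exactly once. -/
theorem stmt_9 {α : Type} [Fintype α] [DecidableEq α] [Nonempty α]
    (y : Node α × Node α → ℝ)
    (hbin : ∀ e, y e = 0 ∨ y e = 1)
    (hsupp : ∀ e, e ∉ Efin α → y e = 0)
    (hflow_s : ∑ e ∈ Eout (Node.s : Node α), y e = 1)
    (hflow_s' : ∑ e ∈ Ein (Node.s' : Node α), y e = 1)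
    (hflow_in : ∀ a : α, ∑ e ∈ Ein (Node.tar a), y e = 1)
    (hflow_cons : ∀ a : α, ∑ e ∈ Ein (Node.tar a), y e = ∑ e ∈ Eout (Node.tar a), y e)
    (t : Node α → ℝ)
    (ht : ∀ e : Node α × Node α, y e = 1 → t e.1 < t e.2) :
    ∃ P : List α, P.Nodup ∧ (∀ a : α, a ∈ P) ∧
      {e : Node α × Node α | y e = 1} =
        listEdges (Node.s :: (P.map Node.tar ++ [Node.s'])) :=
  stmt_9_general y hbin hsupp hflow_s hflow_in hflow_cons t ht
end

section
/- Fix the MT-TSP data: a node set V = {s, s'} ∪ V_tar with V_tar finite and nonempty; edge set E containing all edges from s to targets, between distinct targets, and from targets to s'; for each node i ∈ V a trajectory segment X_i := {(p̲_i + (t − t̲_i)v_i, t) : t ∈ [t̲_i, t̄_i]} ⊆ ℝ³ with t̲_i ≤ t̄_i. Fix y : E → {0, 1} satisfying the flow constraints: Σ_{e ∈ E_out(s)} y_e = 1, Σ_{e ∈ E_in(s')} y_e = 1, Σ_{e ∈ E_in(i)} y_e = 1 and Σ_{e ∈ E_in(i)} y_e = Σ_{e ∈ E_out(i)} y_e for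 every target i. Then a family (z_e, z'_e) ∈ ℝ³ × ℝ³ (e ∈ E) satisfies [(z_e, y_e) ∈ X̃_i and (z'_e, y_e) ∈ X̃_j for every edge e = (i, j), and Σ_{e ∈ E_in(i)} z'_{e,t} = Σ_{e ∈ E_out(i)} z_{e,t} for every target i] if and only if there exist points (p_i, t_i) ∈ X_i for every i ∈ V such that z_e = y_e·(p_i, t_i) and z'_e = y_e·(p_j, t_j) for every edge e = (i, j). -/
open Pointwise

/-- The trajectory segment of a node with initial position `pbar` at time `tlo`, constant
velocity `v`, and time window `[tlo, thi]`, in space-time `ℝ² × ℝ = ℝ³`. -/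
def traj (pbar v : ℝ × ℝ) (tlo thi : ℝ) : Set ((ℝ × ℝ) × ℝ) :=
  {q | ∃ t ∈ Set.Icc tlo thi, q = (pbar + (t - tlo) • v, t)}

/-- The perspective of a set `X`: `X̃ := {(x, λ) : λ ≥ 0, x ∈ λ • X}`. -/
def perspective (X : Set ((ℝ × ℝ) × ℝ)) : Set (((ℝ × ℝ) × ℝ) × ℝ) :=
  {q | 0 ≤ q.2 ∧ q.1 ∈ q.2 • X}

lemma traj_nonempty (pbar v : ℝ × ℝ) (tlo thi : ℝ) (h : tlo ≤ thi) :
    (traj pbar v tlo thi).Nonempty :=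
  ⟨(pbar + (tlo - tlo) • v, tlo), tlo, ⟨le_refl _, h⟩, rfl⟩

lemma traj_time_inj {pbar v : ℝ × ℝ} {tlo thi : ℝ} {q q' : (ℝ × ℝ) × ℝ}
    (hq : q ∈ traj pbar v tlo thi) (hq' : q' ∈ traj pbar v tlo thi)
    (h : q.2 = q'.2) : q = q' := by
  obtain ⟨t, ht, rfl⟩ := hq
  obtain ⟨t', ht', rfl⟩ := hq'
  simp only at h
  subst h
  rfl

lemma stmt11_unique_one {β : Type*} [DecidableEq β] {S : Finset β} {y : β → ℝ}
    (hbin : ∀ e ∈ S, y e = 0 ∨ y e = 1) (hsum : ∑ e ∈ S, y e = 1) :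
    ∃ e ∈ S, y e = 1 ∧ ∀ f ∈ S, y f = 1 → f = e := by
  have hne : ∃ e ∈ S, y e ≠ 0 := by
    by_contra hc
    push_neg at hc
    rw [Finset.sum_eq_zero hc] at hsum
    norm_num at hsum
  obtain ⟨e, heS, he0⟩ := hne
  have he1 : y e = 1 := (hbin e heS).resolve_left he0
  refine ⟨e, heS, he1, fun f hfS hf1 => ?_⟩
  by_contra hfe
  have hsub : ({e, f} : Finset β) ⊆ S := by
    intro x hx
    rcases Finset.mem_insert.mp hx with rfl | hx
    · exact heS
    · rw [Finset.mem_singleton.mp hx]; exact hfS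
  have hle : ∑ x ∈ ({e, f} : Finset β), y x ≤ ∑ x ∈ S, y x := by
    refine Finset.sum_le_sum_of_subset_of_nonneg hsub fun i hi _ => ?_
    rcases hbin i hi with h | h <;> rw [h] <;> norm_num
  rw [Finset.sum_pair (fun h => hfe h.symm), he1, hf1, hsum] at hle
  norm_num at hle

/-- Given the MT-TSP data (trajectory segments `Xᵢ` for all nodes) and a
binary flow `y` satisfying the flow constraints, a family `(z_e, z'_e)` satisfies the
perspective constraints `(z_e, y_e) ∈ X̃ᵢ`, `(z'_e, y_e) ∈ X̃ⱼ` for every edge `e = (i,j)`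
together with the time flow-conservation `Σ_{e ∈ E_in(i)} z'_{e,t} = Σ_{e ∈ E_out(i)} z_{e,t}`
at every target, if and only if there exist points `(pᵢ, tᵢ) ∈ Xᵢ` for all nodes `i` such
that `z_e = y_e • (pᵢ, tᵢ)` and `z'_e = y_e • (pⱼ, tⱼ)` for every edge `e = (i, j)`. -/
theorem stmt_11 {α : Type} [Fintype α] [DecidableEq α] [Nonempty α]
    (pbar vel : Node α → ℝ × ℝ) (tlo thi : Node α → ℝ) (hwin : ∀ i, tlo i ≤ thi i)
    (y : Node α × Node α → ℝ)
    (hbin : ∀ e ∈ Efin α, y e = 0 ∨ y e = 1)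
    (hflow_s : ∑ e ∈ Eout (Node.s : Node α), y e = 1)
    (hflow_s' : ∑ e ∈ Ein (Node.s' : Node α), y e = 1)
    (hflow_in : ∀ a : α, ∑ e ∈ Ein (Node.tar a), y e = 1)
    (hflow_cons : ∀ a : α, ∑ e ∈ Ein (Node.tar a), y e = ∑ e ∈ Eout (Node.tar a), y e)
    (z z' : Node α × Node α → (ℝ × ℝ) × ℝ) :
    ((∀ e ∈ Efin α,
        (z e, y e) ∈ perspective (traj (pbar e.1) (vel e.1) (tlo e.1) (thi e.1)) ∧
        (z' e, y e) ∈ perspective (traj (pbar e.2) (vel e.2) (tlo e.2) (thi e.2))) ∧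
      (∀ a : α, ∑ e ∈ Ein (Node.tar a), (z' e).2 = ∑ e ∈ Eout (Node.tar a), (z e).2))
    ↔
    (∃ pt : Node α → (ℝ × ℝ) × ℝ,
      (∀ i : Node α, pt i ∈ traj (pbar i) (vel i) (tlo i) (thi i)) ∧
      (∀ e ∈ Efin α, z e = y e • pt e.1 ∧ z' e = y e • pt e.2)) := by
  have hEinE : ∀ (i : Node α) e, e ∈ Ein i → e ∈ Efin α ∧ e.2 = i := fun i e he =>
    Finset.mem_filter.mp he
  have hEoutE : ∀ (i : Node α) e, e ∈ Eout i → e ∈ Efin α ∧ e.1 = i := fun i e he =>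
    Finset.mem_filter.mp he
  have hclass : ∀ e ∈ Efin α,
      (e.1 = Node.s ∨ ∃ a, e.1 = Node.tar a) ∧ (e.2 = Node.s' ∨ ∃ a, e.2 = Node.tar a) := by
    rintro ⟨i, j⟩ he
    simp only [Efin, Finset.mem_filter, Finset.mem_univ, true_and] at he
    cases i <;> cases j <;> simp_all [isEdge]
  constructor
  · rintro ⟨hpersp, hcons⟩
    -- edges with y = 0 have z = z' = 0
    have hz0 : ∀ e ∈ Efin α, y e = 0 → z e = 0 ∧ z' e = 0 := by
      intro e he h0
      obtain ⟨h1, h2⟩ := hpersp e he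
      rw [perspective, Set.mem_setOf_eq] at h1 h2
      simp only [h0] at h1 h2
      obtain ⟨x1, _, hx1⟩ := Set.mem_smul_set.mp h1.2
      obtain ⟨x2, _, hx2⟩ := Set.mem_smul_set.mp h2.2
      rw [zero_smul] at hx1 hx2
      exact ⟨hx1.symm, hx2.symm⟩
    -- edges with y = 1 have z, z' on the trajectories
    have hz1 : ∀ e ∈ Efin α, y e = 1 →
        z e ∈ traj (pbar e.1) (vel e.1) (tlo e.1) (thi e.1) ∧
        z' e ∈ traj (pbar e.2) (vel e.2) (tlo e.2) (thi e.2) := by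
      intro e he h1
      obtain ⟨hp1, hp2⟩ := hpersp e he
      rw [perspective, Set.mem_setOf_eq] at hp1 hp2
      simp only [h1] at hp1 hp2
      obtain ⟨x1, hx1m, hx1⟩ := Set.mem_smul_set.mp hp1.2
      obtain ⟨x2, hx2m, hx2⟩ := Set.mem_smul_set.mp hp2.2
      rw [one_smul] at hx1 hx2
      exact ⟨hx1 ▸ hx1m, hx2 ▸ hx2m⟩
    have hbin_in : ∀ (i : Node α), ∀ e ∈ Ein i, y e = 0 ∨ y e = 1 := fun i e he =>
      hbin e (hEinE i e he).1
    have hbin_out : ∀ (i : Node α), ∀ e ∈ Eout i, y e = 0 ∨ y e = 1 := fun i e he =>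
      hbin e (hEoutE i e he).1
    obtain ⟨es, hes_mem, hes1, hes_uniq⟩ := stmt11_unique_one (hbin_out Node.s) hflow_s
    obtain ⟨es', hes'_mem, hes'1, hes'_uniq⟩ := stmt11_unique_one (hbin_in Node.s') hflow_s'
    have hta : ∀ a : α, ∃ e ∈ Ein (Node.tar a), y e = 1 ∧
        ∀ f ∈ Ein (Node.tar a), y f = 1 → f = e := fun a =>
      stmt11_unique_one (hbin_in _) (hflow_in a)
    have hto : ∀ a : α, ∃ e ∈ Eout (Node.tar a), y e = 1 ∧
        ∀ f ∈ Eout (Node.tar a), y f = 1 → f = e := fun a =>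
      stmt11_unique_one (hbin_out _) ((hflow_cons a) ▸ hflow_in a)
    choose ein hein_mem hein1 hein_uniq using hta
    choose eo heo_mem heo1 heo_uniq using hto
    -- define the points
    refine ⟨fun i => match i with
      | Node.s => z es
      | Node.s' => z' es'
      | Node.tar a => z' (ein a), ?_, ?_⟩
    · intro i
      match i with
      | Node.s =>
        obtain ⟨heE, heq⟩ := hEoutE _ _ hes_mem
        have := (hz1 es heE hes1).1
        rwa [heq] at this
      | Node.s' =>
        obtain ⟨heE, heq⟩ := hEinE _ _ hes'_mem
        have := (hz1 es' heE hes'1).2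
        rwa [heq] at this
      | Node.tar a =>
        obtain ⟨heE, heq⟩ := hEinE _ _ (hein_mem a)
        have := (hz1 (ein a) heE (hein1 a)).2
        rwa [heq] at this
    · intro e he
      rcases hbin e he with h0 | h1
      · obtain ⟨hz, hz'⟩ := hz0 e he h0
        rw [h0, zero_smul, zero_smul]
        exact ⟨hz, hz'⟩
      · rw [h1, one_smul, one_smul]
        obtain ⟨hc1, hc2⟩ := hclass e he
        constructor
        · -- z e = pt e.1
          rcases hc1 with hs | ⟨a, hta'⟩
          · have hmem : e ∈ Eout Node.s := Finset.mem_filter.mpr ⟨he, hs⟩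
            have : e = es := hes_uniq e hmem h1
            rw [hs, this]
          · have hmem : e ∈ Eout (Node.tar a) := Finset.mem_filter.mpr ⟨he, hta'⟩
            have heeo : e = eo a := heo_uniq a e hmem h1
            -- time components agree via flow conservation
            have hsum_in : ∑ f ∈ Ein (Node.tar a), (z' f).2 = (z' (ein a)).2 := by
              refine Finset.sum_eq_single_of_mem _ (hein_mem a) fun f hf hfne => ?_
              rcases hbin_in _ f hf with hf0 | hf1
              · rw [(hz0 f (hEinE _ f hf).1 hf0).2]; rfl
              · exact absurd (hein_uniq a f hf hf1) hfne
            have hsum_out : ∑ f ∈ Eout (Node.tar a), (z f).2 = (z e).2 := by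
              refine Finset.sum_eq_single_of_mem _ hmem fun f hf hfne => ?_
              rcases hbin_out _ f hf with hf0 | hf1
              · rw [(hz0 f (hEoutE _ f hf).1 hf0).1]; rfl
              · exact absurd ((heo_uniq a f hf hf1).trans heeo.symm) hfne
            have htime : (z e).2 = (z' (ein a)).2 := by
              have := hcons a
              rw [hsum_in, hsum_out] at this
              exact this.symm
            have hze : z e ∈ traj (pbar (Node.tar a)) (vel (Node.tar a))
                (tlo (Node.tar a)) (thi (Node.tar a)) := by
              have := (hz1 e he h1).1
              rwa [hta'] at this
            have hzin : z' (ein a) ∈ traj (pbar (Node.tar a)) (vel (Node.tar a))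
                (tlo (Node.tar a)) (thi (Node.tar a)) := by
              obtain ⟨heE, heq⟩ := hEinE _ _ (hein_mem a)
              have := (hz1 (ein a) heE (hein1 a)).2
              rwa [heq] at this
            rw [hta']
            exact traj_time_inj hze hzin htime
        · -- z' e = pt e.2
          rcases hc2 with hs | ⟨a, hta'⟩
          · have hmem : e ∈ Ein Node.s' := Finset.mem_filter.mpr ⟨he, hs⟩
            have : e = es' := hes'_uniq e hmem h1
            rw [hs, this]
          · have hmem : e ∈ Ein (Node.tar a) := Finset.mem_filter.mpr ⟨he, hta'⟩
            have : e = ein a := hein_uniq a e hmem h1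
            rw [hta', this]
  · rintro ⟨pt, hpt, hz⟩
    have hynn : ∀ e ∈ Efin α, (0:ℝ) ≤ y e := by
      intro e he
      rcases hbin e he with h | h <;> rw [h] <;> norm_num
    constructor
    · intro e he
      obtain ⟨h1, h2⟩ := hz e he
      exact ⟨⟨hynn e he, h1 ▸ Set.smul_mem_smul_set (hpt e.1)⟩,
             ⟨hynn e he, h2 ▸ Set.smul_mem_smul_set (hpt e.2)⟩⟩
    · intro a
      have hin : ∑ e ∈ Ein (Node.tar a), (z' e).2
          = (∑ e ∈ Ein (Node.tar a), y e) * (pt (Node.tar a)).2 := by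
        rw [Finset.sum_mul]
        refine Finset.sum_congr rfl fun e he => ?_
        obtain ⟨heE, heq⟩ := hEinE _ e he
        rw [(hz e heE).2, heq]
        rfl
      have hout : ∑ e ∈ Eout (Node.tar a), (z e).2
          = (∑ e ∈ Eout (Node.tar a), y e) * (pt (Node.tar a)).2 := by
        rw [Finset.sum_mul]
        refine Finset.sum_congr rfl fun e he => ?_
        obtain ⟨heE, heq⟩ := hEoutE _ e he
        rw [(hz e heE).1, heq]
        rfl
      rw [hin, hout, hflow_cons a]
end

section
/- Let (y, z, z', l) be an optimal solution of the MICP-GCS formulation of the MT-TSP. Define (p_i, t_i) := Σ_{e ∈ E_in(i)} z'_e for every node i ∈ V ∖ {s}, and (p_s, t_s) := Σ_{e ∈ E_out(s)} z_e. Then (p, t, y, z, z', l) is a feasible solution of the biconvex formulation with the same objective value Σ_{e ∈ E} l_e; in particular, it is an optimal solution of the biconvex formulation, and hence an optimal agent tour for the MT-TSP can be recovered from an optimal MICP-GCS solution in this way. Moreover, (p_i, t_i) = z_e and (p_j, t_j) = z'_e for each edge e = (i, j) with y_e = 1. -/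
open Pointwise

/-- Feasibility for the MICP-GCS formulation of the MT-TSP: binary edge variables `y`,
edge variables `z, z'` (space-time points scaled by `y`), cost addends `l`, subject to
the flow constraints, the augmented flow conservation
`Σ_{e ∈ E_in(i)} (z'_{e,t}, y_e) = Σ_{e ∈ E_out(i)} (z_{e,t}, y_e)` at each target,
the perspective constraints, and the speed and cone constraints. -/
def GCSFeasible {α : Type} [Fintype α] [DecidableEq α]
    (pbar vel : Node α → ℝ × ℝ) (tlo thi : Node α → ℝ) (vmax : ℝ)
    (y : Node α × Node α → ℝ) (z z' : Node α × Node α → (ℝ × ℝ) × ℝ)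
    (l : Node α × Node α → ℝ) : Prop :=
  (∀ e ∈ Efin α, y e = 0 ∨ y e = 1) ∧
  (∑ e ∈ Eout (Node.s : Node α), y e = 1) ∧
  (∑ e ∈ Ein (Node.s' : Node α), y e = 1) ∧
  (∀ a : α, ∑ e ∈ Ein (Node.tar a), y e = 1) ∧
  (∀ a : α, ∑ e ∈ Ein (Node.tar a), (z' e).2 = ∑ e ∈ Eout (Node.tar a), (z e).2) ∧
  (∀ a : α, ∑ e ∈ Ein (Node.tar a), y e = ∑ e ∈ Eout (Node.tar a), y e) ∧
  (∀ e ∈ Efin α,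
    (z e, y e) ∈ perspective (traj (pbar e.1) (vel e.1) (tlo e.1) (thi e.1)) ∧
    (z' e, y e) ∈ perspective (traj (pbar e.2) (vel e.2) (tlo e.2) (thi e.2))) ∧
  (∀ e ∈ Efin α,
    0 ≤ l e ∧ l e ≤ vmax * ((z' e).2 - (z e).2) ∧
    ((z' e).1.1 - (z e).1.1) ^ 2 + ((z' e).1.2 - (z e).1.2) ^ 2 ≤ (l e) ^ 2)

/-- Feasibility for the biconvex formulation of the MT-TSP: space-time points `(pᵢ, tᵢ)`
for all nodes, binary edge variables `y`, edge variables `z, z'`, and cost addends `l`,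
subject to the flow constraints, `(pᵢ, tᵢ) ∈ Xᵢ`, the bilinear constraints
`z_e = y_e • (pᵢ, tᵢ)`, `z'_e = y_e • (pⱼ, tⱼ)`, and the speed and cone constraints. -/
def BiconvexFeasible {α : Type} [Fintype α] [DecidableEq α]
    (pbar vel : Node α → ℝ × ℝ) (tlo thi : Node α → ℝ) (vmax : ℝ)
    (pt : Node α → (ℝ × ℝ) × ℝ) (y : Node α × Node α → ℝ)
    (z z' : Node α × Node α → (ℝ × ℝ) × ℝ) (l : Node α × Node α → ℝ) : Prop :=
  (∀ e ∈ Efin α, y e = 0 ∨ y e = 1) ∧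
  (∑ e ∈ Eout (Node.s : Node α), y e = 1) ∧
  (∑ e ∈ Ein (Node.s' : Node α), y e = 1) ∧
  (∀ a : α, ∑ e ∈ Ein (Node.tar a), y e = 1) ∧
  (∀ a : α, ∑ e ∈ Ein (Node.tar a), y e = ∑ e ∈ Eout (Node.tar a), y e) ∧
  (∀ i : Node α, pt i ∈ traj (pbar i) (vel i) (tlo i) (thi i)) ∧
  (∀ e ∈ Efin α, z e = y e • pt e.1 ∧ z' e = y e • pt e.2) ∧
  (∀ e ∈ Efin α,
    0 ≤ l e ∧ l e ≤ vmax * ((z' e).2 - (z e).2) ∧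
    ((z' e).1.1 - (z e).1.1) ^ 2 + ((z' e).1.2 - (z e).1.2) ^ 2 ≤ (l e) ^ 2)

lemma traj_unique {pbar v : ℝ × ℝ} {tlo thi : ℝ} {q1 q2 : (ℝ × ℝ) × ℝ}
    (h1 : q1 ∈ traj pbar v tlo thi) (h2 : q2 ∈ traj pbar v tlo thi) (ht : q1.2 = q2.2) :
    q1 = q2 := by
  obtain ⟨t1, _, rfl⟩ := h1
  obtain ⟨t2, _, rfl⟩ := h2
  simp only at ht
  rw [ht]

lemma persp_one {X : Set ((ℝ × ℝ) × ℝ)} {q : (ℝ × ℝ) × ℝ}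
    (h : (q, (1:ℝ)) ∈ perspective X) : q ∈ X := by
  have := h.2
  simpa [one_smul] using this

lemma persp_zero {X : Set ((ℝ × ℝ) × ℝ)} (hne : X.Nonempty) {q : (ℝ × ℝ) × ℝ}
    (h : (q, (0:ℝ)) ∈ perspective X) : q = 0 := by
  have := h.2
  simp only [perspective] at this
  rw [Set.zero_smul_set hne] at this
  simpa using this

lemma binary_erase_zero {β : Type*} {s : Finset β} {f : β → ℝ} [DecidableEq β]
    (hb : ∀ e ∈ s, f e = 0 ∨ f e = 1) (hs : ∑ e ∈ s, f e = 1)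
    {e0 : β} (he0 : e0 ∈ s) (h1 : f e0 = 1) :
    ∀ e ∈ s, e ≠ e0 → f e = 0 := by
  have hsum : ∑ e ∈ s.erase e0, f e = 0 := by
    have := Finset.add_sum_erase s f he0
    rw [hs, h1] at this
    linarith
  have hz : ∀ e ∈ s.erase e0, f e = 0 := by
    refine (Finset.sum_eq_zero_iff_of_nonneg ?_).mp hsum
    intro e he
    rcases hb e (Finset.mem_of_mem_erase he) with h | h <;> rw [h] <;> norm_num
  intro e he hne
  exact hz e (Finset.mem_erase.mpr ⟨hne, he⟩)

lemma binary_exists_one {β : Type*} {s : Finset β} {f : β → ℝ}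
    (hb : ∀ e ∈ s, f e = 0 ∨ f e = 1) (hs : ∑ e ∈ s, f e = 1) :
    ∃ e ∈ s, f e = 1 := by
  obtain ⟨e, he, hne⟩ := Finset.exists_ne_zero_of_sum_ne_zero (hs ▸ one_ne_zero)
  exact ⟨e, he, (hb e he).resolve_left hne⟩

lemma edge_snd_ne_s {α : Type} [Fintype α] [DecidableEq α] {e : Node α × Node α}
    (he : e ∈ Efin α) : e.2 ≠ Node.s := by
  obtain ⟨e1, e2⟩ := e
  simp only [Efin, Finset.mem_filter] at he
  cases e1 <;> cases e2 <;> simp_all [isEdge]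

lemma edge_fst_ne_s' {α : Type} [Fintype α] [DecidableEq α] {e : Node α × Node α}
    (he : e ∈ Efin α) : e.1 ≠ Node.s' := by
  obtain ⟨e1, e2⟩ := e
  simp only [Efin, Finset.mem_filter] at he
  cases e1 <;> cases e2 <;> simp_all [isEdge]

/-- A biconvex-feasible point yields a GCS-feasible point with the same edge variables. -/
lemma biconvex_to_gcs {α : Type} [Fintype α] [DecidableEq α]
    (pbar vel : Node α → ℝ × ℝ) (tlo thi : Node α → ℝ) (vmax : ℝ)
    (pt : Node α → (ℝ × ℝ) × ℝ) (y : Node α × Node α → ℝ)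
    (z z' : Node α × Node α → (ℝ × ℝ) × ℝ) (l : Node α × Node α → ℝ)
    (hb : BiconvexFeasible pbar vel tlo thi vmax pt y z z' l) :
    GCSFeasible pbar vel tlo thi vmax y z z' l := by
  obtain ⟨b1, b2, b3, b4, b5, b6, b7, b8⟩ := hb
  refine ⟨b1, b2, b3, b4, ?_, b5, ?_, b8⟩
  · intro a
    have hin : ∑ e ∈ Ein (Node.tar a : Node α), (z' e).2
        = (∑ e ∈ Ein (Node.tar a : Node α), y e) * (pt (Node.tar a)).2 := by
      rw [Finset.sum_mul]
      refine Finset.sum_congr rfl fun e he => ?_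
      obtain ⟨heE, he2⟩ := Finset.mem_filter.mp he
      rw [(b7 e heE).2, he2]
      simp [smul_eq_mul]
    have hout : ∑ e ∈ Eout (Node.tar a : Node α), (z e).2
        = (∑ e ∈ Eout (Node.tar a : Node α), y e) * (pt (Node.tar a)).2 := by
      rw [Finset.sum_mul]
      refine Finset.sum_congr rfl fun e he => ?_
      obtain ⟨heE, he1⟩ := Finset.mem_filter.mp he
      rw [(b7 e heE).1, he1]
      simp [smul_eq_mul]
    rw [hin, hout, b5 a]
  · intro e he
    have hy0 : 0 ≤ y e := by rcases b1 e he with h | h <;> rw [h] <;> norm_num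
    obtain ⟨hz, hz'⟩ := b7 e he
    exact ⟨⟨hy0, hz ▸ Set.smul_mem_smul_set (b6 e.1)⟩,
      ⟨hy0, hz' ▸ Set.smul_mem_smul_set (b6 e.2)⟩⟩

/-- Let `(y, z, z', l)` be an optimal solution of the MICP-GCS formulation.
Define `(pᵢ, tᵢ) := Σ_{e ∈ E_in(i)} z'_e` for `i ≠ s` and `(p_s, t_s) := Σ_{e ∈ E_out(s)} z_e`.
Then `(pt, y, z, z', l)` is feasible for the biconvex formulation with the same objective
value `Σ_{e ∈ E} l_e`; in particular it is optimal for the biconvex formulation, so an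
optimal agent tour for the MT-TSP is recovered this way. Moreover `(pᵢ, tᵢ) = z_e` and
`(pⱼ, tⱼ) = z'_e` for each edge `e = (i, j)` with `y_e = 1`. -/
theorem stmt_13 {α : Type} [Fintype α] [DecidableEq α] [Nonempty α]
    (pbar vel : Node α → ℝ × ℝ) (tlo thi : Node α → ℝ) (hwin : ∀ i, tlo i ≤ thi i)
    (vmax : ℝ) (hvmax : 0 < vmax)
    (y : Node α × Node α → ℝ) (z z' : Node α × Node α → (ℝ × ℝ) × ℝ)
    (l : Node α × Node α → ℝ)
    (hfeas : GCSFeasible pbar vel tlo thi vmax y z z' l)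
    (hopt : ∀ (y₀ : Node α × Node α → ℝ) (z₀ z'₀ : Node α × Node α → (ℝ × ℝ) × ℝ)
        (l₀ : Node α × Node α → ℝ), GCSFeasible pbar vel tlo thi vmax y₀ z₀ z'₀ l₀ →
        ∑ e ∈ Efin α, l e ≤ ∑ e ∈ Efin α, l₀ e)
    (pt : Node α → (ℝ × ℝ) × ℝ)
    (hpt : ∀ i : Node α, i ≠ Node.s → pt i = ∑ e ∈ Ein i, z' e)
    (hpts : pt Node.s = ∑ e ∈ Eout (Node.s : Node α), z e) :
    BiconvexFeasible pbar vel tlo thi vmax pt y z z' l ∧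
    (∀ (pt₀ : Node α → (ℝ × ℝ) × ℝ) (y₀ : Node α × Node α → ℝ)
        (z₀ z'₀ : Node α × Node α → (ℝ × ℝ) × ℝ) (l₀ : Node α × Node α → ℝ),
        BiconvexFeasible pbar vel tlo thi vmax pt₀ y₀ z₀ z'₀ l₀ →
        ∑ e ∈ Efin α, l e ≤ ∑ e ∈ Efin α, l₀ e) ∧
    (∀ e ∈ Efin α, y e = 1 → pt e.1 = z e ∧ pt e.2 = z' e) := by
  obtain ⟨hbin, hsouts, hsin, hin1, htflow, hyflow, hpersp, hcone⟩ := hfeas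
  -- zero edges have zero variables
  have hz0 : ∀ e ∈ Efin α, y e = 0 → z e = 0 ∧ z' e = 0 := by
    intro e he hy
    obtain ⟨h1, h2⟩ := hpersp e he
    rw [hy] at h1 h2
    exact ⟨persp_zero (traj_nonempty _ _ _ _ (hwin e.1)) h1,
      persp_zero (traj_nonempty _ _ _ _ (hwin e.2)) h2⟩
  -- sum of y over in-edges of any non-s node is 1
  have hysum : ∀ j : Node α, j ≠ Node.s → ∑ e ∈ Ein j, y e = 1 := by
    intro j hj
    cases j with
    | s => exact absurd rfl hj
    | s' => exact hsin
    | tar a => exact hin1 a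
  have hbinIn : ∀ j : Node α, ∀ e ∈ Ein j, y e = 0 ∨ y e = 1 := by
    intro j e he
    exact hbin e (Finset.mem_filter.mp he).1
  have hbinOut : ∀ j : Node α, ∀ e ∈ Eout j, y e = 0 ∨ y e = 1 := by
    intro j e he
    exact hbin e (Finset.mem_filter.mp he).1
  -- pt j = z' e for the chosen in-edge with y e = 1
  have hptj : ∀ j : Node α, j ≠ Node.s → ∀ e ∈ Ein j, y e = 1 → pt j = z' e := by
    intro j hj e he hy
    rw [hpt j hj]
    refine Finset.sum_eq_single_of_mem e he fun e' he' hne => ?_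
    have hy' : y e' = 0 := binary_erase_zero (hbinIn j) (hysum j hj) he hy e' he' hne
    exact (hz0 e' (Finset.mem_filter.mp he').1 hy').2
  -- pt s = z e for the chosen out-edge with y e = 1
  have hptso : ∀ e ∈ Eout (Node.s : Node α), y e = 1 → pt Node.s = z e := by
    intro e he hy
    rw [hpts]
    refine Finset.sum_eq_single_of_mem e he fun e' he' hne => ?_
    have hy' : y e' = 0 := binary_erase_zero (hbinOut _) hsouts he hy e' he' hne
    exact (hz0 e' (Finset.mem_filter.mp he').1 hy').1
  -- pt is on the trajectory of every node
  have htraj : ∀ i : Node α, pt i ∈ traj (pbar i) (vel i) (tlo i) (thi i) := by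
    intro i
    cases hi : decide (i = Node.s) with
    | true =>
      have hi' : i = Node.s := of_decide_eq_true hi
      subst hi'
      obtain ⟨e, he, hy⟩ := binary_exists_one (hbinOut _) hsouts
      obtain ⟨heE, he1⟩ := Finset.mem_filter.mp he
      have := (hpersp e heE).1
      rw [hy] at this
      have hmem := persp_one this
      rw [he1] at hmem
      rw [hptso e he hy]
      exact hmem
    | false =>
      have hi' : i ≠ Node.s := of_decide_eq_false hi
      obtain ⟨e, he, hy⟩ := binary_exists_one (hbinIn i) (hysum i hi')
      obtain ⟨heE, he2⟩ := Finset.mem_filter.mp he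
      have := (hpersp e heE).2
      rw [hy] at this
      have hmem := persp_one this
      rw [he2] at hmem
      rw [hptj i hi' e he hy]
      exact hmem
  -- bilinear constraints
  have hbil : ∀ e ∈ Efin α, z e = y e • pt e.1 ∧ z' e = y e • pt e.2 := by
    intro e he
    rcases hbin e he with hy | hy
    · obtain ⟨hze, hz'e⟩ := hz0 e he hy
      rw [hy, hze, hz'e]
      simp
    · rw [hy, one_smul, one_smul]
      have he2s : e.2 ≠ Node.s := edge_snd_ne_s he
      have heIn : e ∈ Ein e.2 := Finset.mem_filter.mpr ⟨he, rfl⟩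
      have hz'eq : z' e = pt e.2 := (hptj e.2 he2s e heIn hy).symm
      refine ⟨?_, hz'eq⟩
      -- z e = pt e.1
      cases h1 : e.1 with
      | s =>
        have heOut : e ∈ Eout Node.s := Finset.mem_filter.mpr ⟨he, h1⟩
        exact (hptso e heOut hy).symm
      | s' => exact absurd h1 (edge_fst_ne_s' he)
      | tar a =>
        -- use time-flow conservation at tar a
        have heOut : e ∈ Eout (Node.tar a) := Finset.mem_filter.mpr ⟨he, h1⟩
        have hyout : ∑ e' ∈ Eout (Node.tar a : Node α), y e' = 1 := by
          rw [← hyflow a]; exact hin1 a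
        have hsumout : ∑ e' ∈ Eout (Node.tar a : Node α), (z e').2 = (z e).2 := by
          refine Finset.sum_eq_single_of_mem e heOut fun e' he' hne => ?_
          have hy' : y e' = 0 := binary_erase_zero (hbinOut _) hyout heOut hy e' he' hne
          rw [(hz0 e' (Finset.mem_filter.mp he').1 hy').1]
          rfl
        have hpt2 : (pt (Node.tar a)).2 = (z e).2 := by
          rw [hpt (Node.tar a) (by simp), Prod.snd_sum, htflow a, hsumout]
        have hzmem : z e ∈ traj (pbar (Node.tar a)) (vel (Node.tar a))
            (tlo (Node.tar a)) (thi (Node.tar a)) := by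
          have := (hpersp e he).1
          rw [hy] at this
          have hmem := persp_one this
          rwa [h1] at hmem
        exact (traj_unique (htraj (Node.tar a)) hzmem hpt2).symm
  have hBfeas : BiconvexFeasible pbar vel tlo thi vmax pt y z z' l :=
    ⟨hbin, hsouts, hsin, hin1, hyflow, htraj, hbil, hcone⟩
  refine ⟨hBfeas, ?_, ?_⟩
  · intro pt₀ y₀ z₀ z'₀ l₀ hb
    exact hopt y₀ z₀ z'₀ l₀ (biconvex_to_gcs pbar vel tlo thi vmax pt₀ y₀ z₀ z'₀ l₀ hb)
  · intro e he hy
    obtain ⟨h1, h2⟩ := hbil e he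
    rw [hy, one_smul] at h1 h2
    exact ⟨h1.symm, h2.symm⟩
end

section
/- Suppose all time windows satisfy 0 ≤ t̲_i ≤ t̄_i ≤ T and the constant R satisfies ‖(p̲_j + (t_j − t̲_j)v_j) − (p̲_i + (t_i − t̲_i)v_i)‖₂ ≤ R for all nodes i, j ∈ V and all t_i ∈ [t̲_i, t̄_i], t_j ∈ [t̲_j, t̄_j]. Then the optimal value of the big-M MICP formulation of the MT-TSP equals the optimal value of the biconvex formulation; that is, the infimum of Σ_{e ∈ E} l̃_e over all points feasible for the big-M MICP equals the infimum of Σ_{e ∈ E} l_e over all points feasible for the biconvex formulation. -/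
open Pointwise

/-- Feasibility for the big-M MICP formulation (Stieber et al.) of the MT-TSP:
visit times `t` within the time windows, binary edge variables `y` satisfying the flow
constraints, and for each edge `e = (i, j)` the auxiliary variables
`l̃_e, l̄_e ≥ 0` and `l_{e,x}, l_{e,y}` (coordinate differences of the node positions at
the visit times), subject to the big-M speed constraint
`l̃_e ≤ v_max(t_j − t_i + T(1 − y_e))`, the big-M cone shift `l̄_e = l̃_e + R(1 − y_e)`,
and the second-order cone constraint `l_{e,x}² + l_{e,y}² ≤ l̄_e²`. -/
def MICPFeasible {α : Type} [Fintype α] [DecidableEq α]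
    (pbar vel : Node α → ℝ × ℝ) (tlo thi : Node α → ℝ) (vmax T R : ℝ)
    (t : Node α → ℝ) (y : Node α × Node α → ℝ)
    (ltil lbar lx ly : Node α × Node α → ℝ) : Prop :=
  (∀ i : Node α, tlo i ≤ t i ∧ t i ≤ thi i) ∧
  (∀ e ∈ Efin α, y e = 0 ∨ y e = 1) ∧
  (∑ e ∈ Eout (Node.s : Node α), y e = 1) ∧
  (∑ e ∈ Ein (Node.s' : Node α), y e = 1) ∧
  (∀ a : α, ∑ e ∈ Ein (Node.tar a), y e = 1) ∧
  (∀ a : α, ∑ e ∈ Ein (Node.tar a), y e = ∑ e ∈ Eout (Node.tar a), y e) ∧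
  (∀ e ∈ Efin α,
    lx e = ((pbar e.2).1 + (t e.2 - tlo e.2) * (vel e.2).1)
            - ((pbar e.1).1 + (t e.1 - tlo e.1) * (vel e.1).1) ∧
    ly e = ((pbar e.2).2 + (t e.2 - tlo e.2) * (vel e.2).2)
            - ((pbar e.1).2 + (t e.1 - tlo e.1) * (vel e.1).2) ∧
    0 ≤ ltil e ∧ 0 ≤ lbar e ∧
    ltil e ≤ vmax * (t e.2 - t e.1 + T * (1 - y e)) ∧
    lbar e = ltil e + R * (1 - y e) ∧
    (lx e) ^ 2 + (ly e) ^ 2 ≤ (lbar e) ^ 2)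

/-! Both formulations carry the same flow variables `y`. A big-M point becomes a biconvex one by
scaling its costs by `y` (the big-M constraints of unused edges are dropped), and a biconvex
point becomes a big-M one by the same scaling: on an unused edge the big-M constants switch the
constraints off, because `T` dominates every backward time difference and `R` every distance. -/

lemma binary_mul_le_self {y a : ℝ} (hy : y = 0 ∨ y = 1) (ha : 0 ≤ a) : y * a ≤ a := by
  rcases hy with rfl | rfl <;> simp [ha]

lemma biconvex_edge_of_bigM_edge {y ltil lbar vmax T R ti tj xi xj yi yj : ℝ}
    (hy : y = 0 ∨ y = 1) (hltil : 0 ≤ ltil) (hspeed : ltil ≤ vmax * (tj - ti + T * (1 - y)))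
    (hlbar : lbar = ltil + R * (1 - y)) (hcone : (xj - xi) ^ 2 + (yj - yi) ^ 2 ≤ lbar ^ 2) :
    0 ≤ y * ltil ∧ y * ltil ≤ vmax * (y * tj - y * ti) ∧
      (y * xj - y * xi) ^ 2 + (y * yj - y * yi) ^ 2 ≤ (y * ltil) ^ 2 := by
  rcases hy with rfl | rfl
  · simp
  · subst hlbar
    simp only [one_mul, sub_self, mul_zero, add_zero] at *
    exact ⟨hltil, hspeed, hcone⟩

lemma bigM_edge_of_biconvex_edge {y l vmax T R ti tj xi xj yi yj : ℝ}
    (hy : y = 0 ∨ y = 1) (hl : 0 ≤ l) (hspeed : l ≤ vmax * (y * tj - y * ti))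
    (hcone : (y * xj - y * xi) ^ 2 + (y * yj - y * yi) ^ 2 ≤ l ^ 2)
    (hvmax : 0 ≤ vmax) (hback : 0 ≤ tj - ti + T) (hR : √((xj - xi) ^ 2 + (yj - yi) ^ 2) ≤ R) :
    0 ≤ y * l ∧ 0 ≤ y * l + R * (1 - y) ∧ y * l ≤ vmax * (tj - ti + T * (1 - y)) ∧
      (xj - xi) ^ 2 + (yj - yi) ^ 2 ≤ (y * l + R * (1 - y)) ^ 2 := by
  obtain ⟨hR0, hR⟩ := Real.sqrt_le_iff.mp hR
  rcases hy with rfl | rfl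
  · simp only [zero_mul, sub_zero, mul_one, zero_add]
    exact ⟨le_rfl, hR0, mul_nonneg hvmax hback, hR⟩
  · simp only [one_mul, sub_self, mul_zero, add_zero] at *
    exact ⟨hl, hl, hspeed, hcone⟩

def trajPoint (pbar v : ℝ × ℝ) (tlo t : ℝ) : (ℝ × ℝ) × ℝ :=
  (pbar + (t - tlo) • v, t)

lemma trajPoint_mem_traj {pbar v : ℝ × ℝ} {tlo thi t : ℝ} (ht : t ∈ Set.Icc tlo thi) :
    trajPoint pbar v tlo t ∈ traj pbar v tlo thi :=
  ⟨t, ht, rfl⟩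

lemma eq_trajPoint_of_mem_traj {pbar v : ℝ × ℝ} {tlo thi : ℝ} {q : (ℝ × ℝ) × ℝ}
    (hq : q ∈ traj pbar v tlo thi) : q.2 ∈ Set.Icc tlo thi ∧ q = trajPoint pbar v tlo q.2 := by
  obtain ⟨t, ht, rfl⟩ := hq
  exact ⟨ht, rfl⟩

section Formulations

variable {α : Type} [Fintype α] [DecidableEq α]
  {pbar vel : Node α → ℝ × ℝ} {tlo thi : Node α → ℝ} {vmax T R : ℝ}

theorem MICPFeasible.exists_biconvexFeasible_le {t : Node α → ℝ} {y : Node α × Node α → ℝ}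
    {ltil lbar lx ly : Node α × Node α → ℝ}
    (hF : MICPFeasible pbar vel tlo thi vmax T R t y ltil lbar lx ly) :
    ∃ (pt : Node α → (ℝ × ℝ) × ℝ) (z z' : Node α × Node α → (ℝ × ℝ) × ℝ)
      (l : Node α × Node α → ℝ), BiconvexFeasible pbar vel tlo thi vmax pt y z z' l ∧
      ∑ e ∈ Efin α, l e ≤ ∑ e ∈ Efin α, ltil e := by
  obtain ⟨hwin, hbin, hs, hs', hin, hcons, hedge⟩ := hF
  let pt i := trajPoint (pbar i) (vel i) (tlo i) (t i)
  refine ⟨pt, fun e => y e • pt e.1, fun e => y e • pt e.2, fun e => y e * ltil e,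
    ⟨hbin, hs, hs', hin, hcons, fun i => trajPoint_mem_traj (hwin i), fun _ _ => ⟨rfl, rfl⟩,
      fun e he => ?_⟩,
    Finset.sum_le_sum fun e he => binary_mul_le_self (hbin e he) (hedge e he).2.2.1⟩
  obtain ⟨hlx, hly, hltil, -, hspeed, hlbar, hcone⟩ := hedge e he
  rw [hlx, hly] at hcone
  simpa [pt, trajPoint, mul_add] using
    biconvex_edge_of_bigM_edge (hbin e he) hltil hspeed hlbar hcone

theorem BiconvexFeasible.exists_MICPFeasible_le {pt : Node α → (ℝ × ℝ) × ℝ}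
    {y : Node α × Node α → ℝ} {z z' : Node α × Node α → (ℝ × ℝ) × ℝ}
    {l : Node α × Node α → ℝ} (hvmax : 0 ≤ vmax) (htlo : ∀ i, 0 ≤ tlo i)
    (hthi : ∀ i, thi i ≤ T)
    (hR : ∀ i j : Node α, ∀ ti ∈ Set.Icc (tlo i) (thi i), ∀ tj ∈ Set.Icc (tlo j) (thi j),
      Real.sqrt ((((pbar j).1 + (tj - tlo j) * (vel j).1)
            - ((pbar i).1 + (ti - tlo i) * (vel i).1)) ^ 2 +
          (((pbar j).2 + (tj - tlo j) * (vel j).2)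
            - ((pbar i).2 + (ti - tlo i) * (vel i).2)) ^ 2) ≤ R)
    (hF : BiconvexFeasible pbar vel tlo thi vmax pt y z z' l) :
    ∃ (t : Node α → ℝ) (ltil lbar lx ly : Node α × Node α → ℝ),
      MICPFeasible pbar vel tlo thi vmax T R t y ltil lbar lx ly ∧
      ∑ e ∈ Efin α, ltil e ≤ ∑ e ∈ Efin α, l e := by
  obtain ⟨hbin, hs, hs', hin, hcons, htraj, hz, hedge⟩ := hF
  have hwin i := (eq_trajPoint_of_mem_traj (htraj i)).1
  let t i := (pt i).2
  refine ⟨t, fun e => y e * l e, fun e => y e * l e + R * (1 - y e),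
    fun e => ((pbar e.2).1 + (t e.2 - tlo e.2) * (vel e.2).1)
      - ((pbar e.1).1 + (t e.1 - tlo e.1) * (vel e.1).1),
    fun e => ((pbar e.2).2 + (t e.2 - tlo e.2) * (vel e.2).2)
      - ((pbar e.1).2 + (t e.1 - tlo e.1) * (vel e.1).2),
    ⟨hwin, hbin, hs, hs', hin, hcons, fun e he => ?_⟩,
    Finset.sum_le_sum fun e he => binary_mul_le_self (hbin e he) (hedge e he).1⟩
  obtain ⟨hl, hspeed, hcone⟩ := hedge e he
  have hpos i : pt i = trajPoint (pbar i) (vel i) (tlo i) (t i) :=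
    (eq_trajPoint_of_mem_traj (htraj i)).2
  rw [(hz e he).1, (hz e he).2, hpos e.1, hpos e.2] at hspeed hcone
  simp only [trajPoint, Prod.smul_fst, Prod.smul_snd, Prod.fst_add, Prod.snd_add, smul_eq_mul]
    at hspeed hcone
  have hback : 0 ≤ t e.2 - t e.1 + T := by
    linarith [(hwin e.1).2, (hwin e.2).1, htlo e.2, hthi e.1]
  obtain ⟨hltil, hlbar, hspeed', hcone'⟩ := bigM_edge_of_biconvex_edge (hbin e he) hl hspeed hcone
    hvmax hback (hR e.1 e.2 (t e.1) (hwin e.1) (t e.2) (hwin e.2))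
  exact ⟨rfl, rfl, hltil, hlbar, hspeed', rfl, hcone'⟩

end Formulations

theorem stmt_14_general {α : Type} [Fintype α] [DecidableEq α]
    (pbar vel : Node α → ℝ × ℝ) (tlo thi : Node α → ℝ)
    (vmax T R : ℝ) (hvmax : 0 < vmax)
    (hwin : ∀ i : Node α, 0 ≤ tlo i ∧ tlo i ≤ thi i ∧ thi i ≤ T)
    (hR : ∀ i j : Node α, ∀ ti ∈ Set.Icc (tlo i) (thi i), ∀ tj ∈ Set.Icc (tlo j) (thi j),
      Real.sqrt ((((pbar j).1 + (tj - tlo j) * (vel j).1)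
            - ((pbar i).1 + (ti - tlo i) * (vel i).1)) ^ 2 +
          (((pbar j).2 + (tj - tlo j) * (vel j).2)
            - ((pbar i).2 + (ti - tlo i) * (vel i).2)) ^ 2) ≤ R) :
    sInf {c : ℝ | ∃ (t : Node α → ℝ) (y : Node α × Node α → ℝ)
        (ltil lbar lx ly : Node α × Node α → ℝ),
        MICPFeasible pbar vel tlo thi vmax T R t y ltil lbar lx ly ∧
        c = ∑ e ∈ Efin α, ltil e} =
    sInf {c : ℝ | ∃ (pt : Node α → (ℝ × ℝ) × ℝ) (y : Node α × Node α → ℝ)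
        (z z' : Node α × Node α → (ℝ × ℝ) × ℝ) (l : Node α × Node α → ℝ),
        BiconvexFeasible pbar vel tlo thi vmax pt y z z' l ∧ c = ∑ e ∈ Efin α, l e} := by
  apply csInf_eq_csInf_of_forall_exists_le
  · rintro _ ⟨t, y, ltil, lbar, lx, ly, hF, rfl⟩
    obtain ⟨pt, z, z', l, hB, hle⟩ := hF.exists_biconvexFeasible_le
    exact ⟨_, ⟨pt, y, z, z', l, hB, rfl⟩, hle⟩
  · rintro _ ⟨pt, y, z, z', l, hB, rfl⟩
    obtain ⟨t, ltil, lbar, lx, ly, hF, hle⟩ := hB.exists_MICPFeasible_le hvmax.le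
      (fun i => (hwin i).1) (fun i => (hwin i).2.2) hR
    exact ⟨_, ⟨t, y, ltil, lbar, lx, ly, hF, rfl⟩, hle⟩

/-- If all time windows satisfy `0 ≤ t̲ᵢ ≤ t̄ᵢ ≤ T` and the constant `R`
bounds the distance between the positions of any two nodes at any times within their
time windows, then the optimal value of the big-M MICP formulation of the MT-TSP equals
the optimal value of the biconvex formulation. -/
theorem stmt_14 {α : Type} [Fintype α] [DecidableEq α] [Nonempty α]
    (pbar vel : Node α → ℝ × ℝ) (tlo thi : Node α → ℝ)
    (vmax T R : ℝ) (hvmax : 0 < vmax) (hT : 0 < T)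
    (hwin : ∀ i : Node α, 0 ≤ tlo i ∧ tlo i ≤ thi i ∧ thi i ≤ T)
    (hR : ∀ i j : Node α, ∀ ti ∈ Set.Icc (tlo i) (thi i), ∀ tj ∈ Set.Icc (tlo j) (thi j),
      Real.sqrt ((((pbar j).1 + (tj - tlo j) * (vel j).1)
            - ((pbar i).1 + (ti - tlo i) * (vel i).1)) ^ 2 +
          (((pbar j).2 + (tj - tlo j) * (vel j).2)
            - ((pbar i).2 + (ti - tlo i) * (vel i).2)) ^ 2) ≤ R) :
    sInf {c : ℝ | ∃ (t : Node α → ℝ) (y : Node α × Node α → ℝ)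
        (ltil lbar lx ly : Node α × Node α → ℝ),
        MICPFeasible pbar vel tlo thi vmax T R t y ltil lbar lx ly ∧
        c = ∑ e ∈ Efin α, ltil e} =
    sInf {c : ℝ | ∃ (pt : Node α → (ℝ × ℝ) × ℝ) (y : Node α × Node α → ℝ)
        (z z' : Node α × Node α → (ℝ × ℝ) × ℝ) (l : Node α × Node α → ℝ),
        BiconvexFeasible pbar vel tlo thi vmax pt y z z' l ∧ c = ∑ e ∈ Efin α, l e} :=
  stmt_14_general pbar vel tlo thi vmax T R hvmax hwin hR
end
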